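/- arXiv:1101.2796 — 9 statements merged into one kernel-verified Lean document; each statement's English description precedes it below -/
import Mathlib

section
/- Let X and Y be sober topological spaces (i.e., T0 and quasi-sober) and let f : X → Y be a continuous map. If every irreducible closed subset of X is the preimage under f of some closed subset of Y, then f is injective. -/
/-- If `X` and `Y` are sober spaces and `f : X → Y` is continuous such that every
irreducible closed subset of `X` is the preimage of some closed subset of `Y`,
then `f` is injective. -/
theorem stmt_0 {X Y : Type*} [TopologicalSpace X] [TopologicalSpace Y]
    [T0Space X] [QuasiSober X] [T0Space Y] [QuasiSober Y]
    (f : X → Y) (hf : Continuous f)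
    (h : ∀ Z : Set X, IsClosed Z → IsIrreducible Z →
      ∃ W : Set Y, IsClosed W ∧ f ⁻¹' W = Z) :
    Function.Injective f := by
  intro a b hab
  have key : ∀ x y : X, f x = f y → y ∈ closure {x} := by
    intro x y hxy
    obtain ⟨W, hWc, hW⟩ := h (closure {x}) isClosed_closure
      (isIrreducible_singleton.closure)
    have hx : x ∈ f ⁻¹' W := hW ▸ subset_closure rfl
    have : y ∈ f ⁻¹' W := by simpa [Set.mem_preimage, hxy] using hx
    rwa [hW] at this
  have h1 : b ⤳ a := specializes_iff_mem_closure.mpr (key b a hab.symm)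
  have h2 : a ⤳ b := specializes_iff_mem_closure.mpr (key a b hab)
  exact (h2.antisymm h1).eq
end

section
/- Let f : X → Y be a continuous map of topological spaces. The following are equivalent: (i) the preimage map on closed sets is injective, i.e., for all closed subsets z, w of Y, f⁻¹(z) = f⁻¹(w) implies z = w; (ii) for every closed subset z of Y, the set (range f) ∩ z is dense in z, i.e., z ⊆ closure((range f) ∩ z). -/
/-- For a continuous map `f : X → Y`, the preimage map on closed sets is injective
if and only if, for every closed subset `z` of `Y`, the set `range f ∩ z` is dense
in `z`. -/
theorem stmt_2 {X Y : Type*} [TopologicalSpace X] [TopologicalSpace Y]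
    (f : X → Y) (hf : Continuous f) :
    (∀ z w : Set Y, IsClosed z → IsClosed w → f ⁻¹' z = f ⁻¹' w → z = w) ↔
      (∀ z : Set Y, IsClosed z → z ⊆ closure (Set.range f ∩ z)) := by
  constructor
  · intro h z hz
    have hw : IsClosed (closure (Set.range f ∩ z)) := isClosed_closure
    have heq : f ⁻¹' z = f ⁻¹' (closure (Set.range f ∩ z)) := by
      apply Set.Subset.antisymm
      · intro x hx
        exact subset_closure ⟨⟨x, rfl⟩, hx⟩
      · intro x hx
        have : closure (Set.range f ∩ z) ⊆ z :=
          hz.closure_subset_iff.mpr Set.inter_subset_right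
        exact this hx
    exact (h z _ hz hw heq).le
  · intro h z w hz hw heq
    have key : ∀ z w : Set Y, IsClosed z → IsClosed w →
        f ⁻¹' z = f ⁻¹' w → z ⊆ w := by
      intro z w hz hw heq
      refine (h z hz).trans ?_
      rw [← hw.closure_eq]
      apply closure_mono
      rintro y ⟨⟨x, rfl⟩, hy⟩
      have : x ∈ f ⁻¹' w := heq ▸ hy
      exact this
    exact Set.Subset.antisymm (key z w hz hw heq) (key w z hw hz heq.symm)
end

section
/- Let X be a noetherian quasi-sober topological space, Y a T0 topological space, and f : X → Y a continuous map such that for every closed subset z of Y, the set (range f) ∩ z is dense in z (i.e., z ⊆ closure((range f) ∩ z)). Then f is surjective. -/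
/-- If `X` is a noetherian quasi-sober space, `Y` is a `T0` space and `f : X → Y`
is a continuous map such that `range f ∩ z` is dense in `z` for every closed
subset `z` of `Y`, then `f` is surjective. -/
theorem stmt_3 {X Y : Type*} [TopologicalSpace X] [TopologicalSpace Y]
    [TopologicalSpace.NoetherianSpace X] [QuasiSober X] [T0Space Y]
    (f : X → Y) (hf : Continuous f)
    (hdense : ∀ z : Set Y, IsClosed z → z ⊆ closure (Set.range f ∩ z)) :
    Function.Surjective f := by
  intro y
  set z := closure ({y} : Set Y) with hz
  have hzc : IsClosed z := isClosed_closure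
  have hzirr : IsIrreducible z := isIrreducible_singleton.closure
  have hSc : IsClosed (f ⁻¹' z) := hzc.preimage hf
  obtain ⟨S, hSfin, hScl, hSirr, hSeq⟩ :=
    TopologicalSpace.NoetherianSpace.exists_finite_set_isClosed_irreducible hSc
  -- z ⊆ union of closures of images
  have him : Set.range f ∩ z = f '' (f ⁻¹' z) := by
    rw [Set.image_preimage_eq_inter_range, Set.inter_comm]
  have hcov : z ⊆ ⋃₀ ((fun t => closure (f '' t)) '' S) := by
    intro p hp
    have := hdense z hzc hp
    rw [him, hSeq, Set.image_sUnion] at this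
    have hsub : closure (⋃₀ ((f '' ·) '' S)) ⊆ ⋃₀ ((fun t => closure (f '' t)) '' S) := by
      have hcl : IsClosed (⋃₀ ((fun t => closure (f '' t)) '' S)) := by
        rw [Set.sUnion_image]
        exact hSfin.isClosed_biUnion fun t _ => isClosed_closure
      apply closure_minimal _ hcl
      rintro q ⟨_, ⟨t, ht, rfl⟩, hq⟩
      exact ⟨closure (f '' t), ⟨t, ht, rfl⟩, subset_closure hq⟩
    exact hsub this
  -- irreducibility: z contained in one of them
  have hfin : ((fun t => closure (f '' t)) '' S).Finite := hSfin.image _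
  obtain ⟨w, hwmem, hzw⟩ := isIrreducible_iff_sUnion_isClosed.mp hzirr hfin.toFinset
    (by rintro _ hw; rw [Set.Finite.mem_toFinset] at hw
        obtain ⟨t, _, rfl⟩ := hw; exact isClosed_closure)
    (by rwa [Set.Finite.coe_toFinset])
  rw [Set.Finite.mem_toFinset] at hwmem
  obtain ⟨t, htS, rfl⟩ := hwmem
  -- generic point of t
  obtain ⟨ξ, hξ⟩ := QuasiSober.sober (hSirr t htS) (hScl t htS)
  have hξt : ξ ∈ t := hξ ▸ subset_closure rfl
  have h1 : closure (f '' t) ⊆ closure ({f ξ} : Set Y) := by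
    rw [← hξ]
    refine closure_minimal ?_ isClosed_closure
    simpa using image_closure_subset_closure_image (s := ({ξ} : Set X)) hf
  have hfz : f ξ ∈ z := by
    have : ξ ∈ f ⁻¹' z := by rw [hSeq]; exact Set.mem_sUnion.mpr ⟨t, htS, hξt⟩
    exact this
  have h2 : closure ({f ξ} : Set Y) ⊆ z :=
    closure_minimal (Set.singleton_subset_iff.mpr hfz) hzc
  have : closure ({f ξ} : Set Y) = closure ({y} : Set Y) :=
    le_antisymm h2 (hzw.trans h1)
  exact ⟨ξ, (inseparable_iff_closure_eq.mpr this).eq⟩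
end

section
/- Let X and Y be spectral (coherent) topological spaces and let f : X → Y be a continuous spectral map such that for every closed subset z of Y, the set (range f) ∩ z is dense in z (i.e., z ⊆ closure((range f) ∩ z)). Then f is surjective. -/
/-- A topological space is spectral (coherent) if it is compact, `T0`, quasi-sober,
quasi-separated, and its compact open sets form a basis of the topology. -/
def IsSpectralSpace (X : Type*) [TopologicalSpace X] : Prop :=
  CompactSpace X ∧ T0Space X ∧ QuasiSober X ∧ QuasiSeparatedSpace X ∧
    TopologicalSpace.IsTopologicalBasis {U : Set X | IsOpen U ∧ IsCompact U}

/-- Key lemma: if `K` is a compact member of an ultrafilter `𝒰`, then `K` meets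
the intersection of all closed members of `𝒰`. -/
lemma compact_mem_inter_sInter_closed {X : Type*} [TopologicalSpace X]
    (𝒰 : Ultrafilter X) {K : Set X} (hK : IsCompact K) (hKU : K ∈ 𝒰) :
    (K ∩ ⋂₀ {C : Set X | IsClosed C ∧ C ∈ 𝒰}).Nonempty := by
  by_contra h
  rw [Set.not_nonempty_iff_eq_empty] at h
  have hcover : K ⊆ ⋃ i : {C : Set X // IsClosed C ∧ C ∈ 𝒰}, (↑i : Set X)ᶜ := by
    intro p hp
    have hpZ : p ∉ ⋂₀ {C : Set X | IsClosed C ∧ C ∈ 𝒰} := by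
      intro hm
      exact absurd (Set.mem_inter hp hm) (by simp [h])
    rw [Set.mem_sInter] at hpZ
    push_neg at hpZ
    obtain ⟨C, hC, hpC⟩ := hpZ
    exact Set.mem_iUnion.2 ⟨⟨C, hC⟩, hpC⟩
  obtain ⟨t, ht⟩ := hK.elim_finite_subcover
    (fun i : {C : Set X // IsClosed C ∧ C ∈ 𝒰} => (↑i : Set X)ᶜ)
    (fun i => i.2.1.isOpen_compl) hcover
  have hmem : (⋂ i ∈ t, (↑i : Set X)) ∈ 𝒰 :=
    (Filter.biInter_finset_mem t).2 fun i _ => i.2.2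
  have hsub : (⋂ i ∈ t, (↑i : Set X)) ⊆ Kᶜ := by
    intro p hp hpK
    obtain ⟨i, hi, hpi⟩ := Set.mem_iUnion₂.1 (ht hpK)
    exact hpi (Set.mem_iInter₂.1 hp i hi)
  have : Kᶜ ∈ 𝒰 := Filter.mem_of_superset hmem hsub
  have : (∅ : Set X) ∈ 𝒰 := by
    rw [← Set.inter_compl_self K]
    exact Filter.inter_mem hKU this
  exact 𝒰.empty_notMem this

/-- An epimorphism of coherent spaces is surjective: if `f : X → Y` is a spectral map
of spectral spaces such that `range f ∩ z` is dense in `z` for every closed set `z`,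
then `f` is surjective. -/
theorem stmt_5 {X Y : Type*} [TopologicalSpace X] [TopologicalSpace Y]
    (hX : IsSpectralSpace X) (hY : IsSpectralSpace Y)
    (f : X → Y) (hf : IsSpectralMap f)
    (hdense : ∀ z : Set Y, IsClosed z → z ⊆ closure (Set.range f ∩ z)) :
    Function.Surjective f := by
  obtain ⟨hXc, hXt0, hXsober, hXqs, hXbasis⟩ := hX
  obtain ⟨hYc, hYt0, hYsober, hYqs, hYbasis⟩ := hY
  intro y
  set z : Set Y := closure {y} with hz
  have hzc : IsClosed z := isClosed_closure
  -- The filter `comap f (𝓝 y ⊓ 𝓟 z)` is nontrivial by the density hypothesis.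
  have hne : (Filter.comap f (nhds y ⊓ Filter.principal z)).NeBot := by
    rw [Filter.comap_neBot_iff]
    intro s hs
    rw [Filter.mem_inf_iff] at hs
    obtain ⟨t₁, ht₁, t₂, ht₂, rfl⟩ := hs
    rw [Filter.mem_principal] at ht₂
    have hy : y ∈ closure (Set.range f ∩ z) := hdense z hzc (subset_closure rfl)
    obtain ⟨V, hVt, hVo, hyV⟩ := mem_nhds_iff.1 ht₁
    have : (V ∩ (Set.range f ∩ z)).Nonempty :=
      (mem_closure_iff.1 hy) V hVo hyV
    obtain ⟨w, hwV, ⟨x, rfl⟩, hwz⟩ := this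
    exact ⟨x, hVt hwV, ht₂ hwz⟩
  obtain ⟨𝒰, h𝒰⟩ := Ultrafilter.exists_le (Filter.comap f (nhds y ⊓ Filter.principal z))
  -- Z : intersection of all closed members of 𝒰
  set Z : Set X := ⋂₀ {C : Set X | IsClosed C ∧ C ∈ 𝒰} with hZ
  have hZclosed : IsClosed Z := isClosed_sInter fun C hC => hC.1
  -- any open set in 𝒰 meets Z... first: any closed C ∈ 𝒰 contains Z
  have hZsub : ∀ C : Set X, IsClosed C → C ∈ 𝒰 → Z ⊆ C := fun C hC hCU =>
    Set.sInter_subset_of_mem ⟨hC, hCU⟩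
  -- any open set meeting Z is in 𝒰
  have hopen_mem : ∀ U : Set X, IsOpen U → (U ∩ Z).Nonempty → U ∈ 𝒰 := by
    intro U hU hUZ
    by_contra hUn
    have : Uᶜ ∈ 𝒰 := Ultrafilter.compl_mem_iff_notMem.2 hUn
    obtain ⟨p, hpU, hpZ⟩ := hUZ
    exact (hZsub Uᶜ hU.isClosed_compl this hpZ) hpU
  -- Z is irreducible
  have hZne : Z.Nonempty := by
    have := compact_mem_inter_sInter_closed 𝒰 (hXc.isCompact_univ) Filter.univ_mem
    obtain ⟨p, _, hp⟩ := this
    exact ⟨p, hp⟩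
  have hZirr : IsIrreducible Z := by
    refine ⟨hZne, ?_⟩
    intro U V hU hV hUZ hVZ
    obtain ⟨u, huZ, huU⟩ := hUZ
    obtain ⟨v, hvZ, hvV⟩ := hVZ
    obtain ⟨U', ⟨hU'o, hU'c⟩, huU', hU'U⟩ := hXbasis.exists_subset_of_mem_open huU hU
    obtain ⟨V', ⟨hV'o, hV'c⟩, hvV', hV'V⟩ := hXbasis.exists_subset_of_mem_open hvV hV
    have hU'mem : U' ∈ 𝒰 := hopen_mem U' hU'o ⟨u, huU', huZ⟩
    have hV'mem : V' ∈ 𝒰 := hopen_mem V' hV'o ⟨v, hvV', hvZ⟩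
    have hWc : IsCompact (U' ∩ V') := QuasiSeparatedSpace.inter_isCompact U' V' hU'o hU'c hV'o hV'c
    have hWne := compact_mem_inter_sInter_closed 𝒰 hWc (Filter.inter_mem hU'mem hV'mem)
    obtain ⟨p, ⟨hpU', hpV'⟩, hpZ⟩ := hWne
    exact ⟨p, hpZ, hU'U hpU', hV'V hpV'⟩
  -- generic point
  obtain ⟨x, hx⟩ := hXsober.sober hZirr hZclosed
  -- f x ∈ z
  have hzmem : f ⁻¹' z ∈ 𝒰 := by
    apply h𝒰
    exact Filter.preimage_mem_comap (Filter.mem_inf_of_right (Filter.mem_principal_self z))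
  have hxZ : x ∈ Z := by
    rw [← hx.def]
    exact subset_closure rfl
  have hfxz : f x ∈ z := hZsub (f ⁻¹' z) (hzc.preimage hf.continuous) hzmem hxZ
  -- every open nbhd of y contains f x
  have hfx_spec : y ∈ closure {f x} := by
    rw [mem_closure_iff]
    intro V hVo hyV
    obtain ⟨U, ⟨hUo, hUc⟩, hyU, hUV⟩ := hYbasis.exists_subset_of_mem_open hyV hVo
    have hUmem : f ⁻¹' U ∈ 𝒰 := h𝒰 (Filter.preimage_mem_comap
      (Filter.mem_inf_of_left (hUo.mem_nhds hyU)))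
    have hUcpt : IsCompact (f ⁻¹' U) := hUc.preimage_of_isOpen hf hUo
    obtain ⟨p, hpU, hpZ⟩ := compact_mem_inter_sInter_closed 𝒰 hUcpt hUmem
    -- p ∈ f⁻¹ U open, p ∈ Z = closure {x}, so x ∈ f⁻¹ U
    have hxU : x ∈ f ⁻¹' U := by
      have : p ∈ closure {x} := by rw [hx.def]; exact hpZ
      rcases mem_closure_iff.1 this (f ⁻¹' U) (hUo.preimage hf.continuous) hpU with ⟨q, hq, hq'⟩
      rcases hq' with rfl
      exact hq
    exact ⟨f x, hUV hxU, rfl⟩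
  -- conclude by T0
  have h1 : f x ⤳ y := specializes_iff_mem_closure.2 hfx_spec
  have h2 : y ⤳ f x := specializes_iff_mem_closure.2 hfxz
  exact ⟨x, (h1.antisymm h2).eq⟩
end

section
/- Let X and Y be spectral (coherent) topological spaces and let f : X → Y be a continuous spectral map with dense range. Then every minimal point of Y lies in the range of f; that is, if y₀ ∈ Y has no proper generalization (for every y ∈ Y, y₀ ∈ closure{y} implies y ∈ closure{y₀}; equivalently, y₀ is the generic point of an irreducible component of Y), then y₀ ∈ range f. -/
/-!
Among the closed sets `C ⊆ X` with `y₀ ∈ closure (f '' C)` choose a minimal one by Zorn's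
lemma: along a chain the condition survives the intersection because `y₀` has a basis of compact
open neighbourhoods `U` and each `f ⁻¹' U` is compact. A minimal such set is irreducible, so it
has a generic point `x`, and then `f x ⤳ y₀`. Minimality of `y₀` and `T0` force `f x = y₀`.
-/

open Set Topology TopologicalSpace

theorem TopologicalSpace.IsTopologicalBasis.mem_closure_image_iff {X Y : Type*}
    [TopologicalSpace Y] {B : Set (Set Y)} (hB : IsTopologicalBasis B) {f : X → Y}
    {s : Set X} {y : Y} : y ∈ closure (f '' s) ↔ ∀ U ∈ B, y ∈ U → (s ∩ f ⁻¹' U).Nonempty := by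
  simp only [hB.mem_closure_iff, inter_comm _ (f '' _), image_inter_nonempty_iff]

section ClosureImage

variable {X Y : Type*} [TopologicalSpace X] [TopologicalSpace Y] {f : X → Y} {y : Y}

theorem IsSpectralMap.mem_closure_image_sInter_of_isChain
    (hB : IsTopologicalBasis {U : Set Y | IsOpen U ∧ IsCompact U}) (hf : IsSpectralMap f)
    {c : Set (Set X)} (hc : IsChain (· ⊆ ·) c) (hne : c.Nonempty) (hcl : ∀ C ∈ c, IsClosed C)
    (hy : ∀ C ∈ c, y ∈ closure (f '' C)) : y ∈ closure (f '' ⋂₀ c) := by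
  have : Nonempty c := hne.to_subtype
  have hdir : Directed (· ⊇ ·) fun C : c ↦ (C : Set X) :=
    (hc.symm.directedOn (r := fun s t : Set X ↦ s ⊇ t)).directed_val
  rw [hB.mem_closure_image_iff]
  rintro U ⟨hUo, hUc⟩ hyU
  by_contra! hempty
  rw [inter_comm, sInter_eq_iInter] at hempty
  obtain ⟨⟨C, hC⟩, hCU⟩ := (hUc.preimage_of_isOpen hf hUo).elim_directed_family_closed
    (fun C : c ↦ (C : Set X)) (fun C ↦ hcl C C.2) hempty hdir
  have hCU' := hB.mem_closure_image_iff.mp (hy C hC) U ⟨hUo, hUc⟩ hyU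
  rw [inter_comm, hCU] at hCU'
  exact hCU'.ne_empty rfl

theorem isIrreducible_of_minimal_mem_closure_image {m : Set X}
    (hm : Minimal (fun C ↦ IsClosed C ∧ y ∈ closure (f '' C)) m) : IsIrreducible m := by
  obtain ⟨⟨hmcl, hmy⟩, hmin⟩ := hm
  refine ⟨?_, isPreirreducible_iff_isClosed_union_isClosed.mpr ?_⟩
  · by_contra h
    simp [not_nonempty_iff_eq_empty.mp h] at hmy
  intro z₁ z₂ hz₁ hz₂ hcover
  have hsplit : m = (m ∩ z₁) ∪ (m ∩ z₂) := by
    rw [← inter_union_distrib_left, inter_eq_left.mpr hcover]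
  rw [hsplit, image_union, closure_union] at hmy
  rcases hmy with hy₁ | hy₂
  · exact .inl ((hmin ⟨hmcl.inter hz₁, hy₁⟩ inter_subset_left).trans inter_subset_right)
  · exact .inr ((hmin ⟨hmcl.inter hz₂, hy₂⟩ inter_subset_left).trans inter_subset_right)

theorem IsSpectralMap.exists_specializes_of_mem_closure_image [QuasiSober X]
    (hB : IsTopologicalBasis {U : Set Y | IsOpen U ∧ IsCompact U}) (hf : IsSpectralMap f)
    {C : Set X} (hC : IsClosed C) (hy : y ∈ closure (f '' C)) : ∃ x ∈ C, f x ⤳ y := by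
  set S := {C : Set X | IsClosed C ∧ y ∈ closure (f '' C)}
  have hchain (c) (hcS : c ⊆ S) (hc : IsChain (· ⊆ ·) c) (hne : c.Nonempty) :
      ∃ lb ∈ S, ∀ C ∈ c, lb ⊆ C :=
    ⟨⋂₀ c, ⟨isClosed_sInter fun C hC ↦ (hcS hC).1, hf.mem_closure_image_sInter_of_isChain hB hc
      hne (fun C hC ↦ (hcS hC).1) (fun C hC ↦ (hcS hC).2)⟩, fun _ ↦ sInter_subset_of_mem⟩
  obtain ⟨m, hmC, hm⟩ := zorn_superset_nonempty S hchain C ⟨hC, hy⟩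
  have hx := (isIrreducible_of_minimal_mem_closure_image hm).isGenericPoint_genericPoint
    hm.prop.1
  exact ⟨_, hmC hx.mem, (hx.image hf.continuous).specializes hm.prop.2⟩

end ClosureImage

/-- If `f : X → Y` is a dominant spectral map of spectral spaces, then every minimal
point of `Y` lies in the range of `f`. -/
theorem stmt_6 {X Y : Type*} [TopologicalSpace X] [TopologicalSpace Y]
    (hX : IsSpectralSpace X) (hY : IsSpectralSpace Y)
    (f : X → Y) (hf : IsSpectralMap f) (hdom : DenseRange f)
    (y₀ : Y) (hmin : ∀ y : Y, y₀ ∈ closure {y} → y ∈ closure {y₀}) :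
    y₀ ∈ Set.range f := by
  obtain ⟨-, -, hXsober, -, -⟩ := hX
  obtain ⟨-, hYT0, -, -, hYbasis⟩ := hY
  have hy₀ : y₀ ∈ closure (f '' univ) := by simp [image_univ, hdom.closure_range]
  obtain ⟨x, -, hxy₀⟩ := hf.exists_specializes_of_mem_closure_image hYbasis isClosed_univ hy₀
  have hy₀x : y₀ ⤳ f x :=
    specializes_iff_mem_closure.mpr (hmin _ (specializes_iff_mem_closure.mp hxy₀))
  exact ⟨x, (hxy₀.antisymm hy₀x).eq⟩
end

section
/- Let Y be a spectral (coherent) topological space and X ⊆ Y a subset such that X with the subspace topology is spectral and the inclusion X ↪ Y is a spectral map. Then the closure of X in Y equals the set of all points of Y that are specializations of points of X; that is, closure(X) = { y ∈ Y | ∃ x ∈ X, y ∈ closure{x} }. -/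
open Set TopologicalSpace

/-- In a quasi-sober space, a nonempty downward-directed family of nonempty compact open
sets has a common point. -/
lemma aux_exists_mem_of_directed {α : Type*} [TopologicalSpace α] [QuasiSober α]
    (S : Set (Set α)) (hne : S.Nonempty)
    (hopen : ∀ U ∈ S, IsOpen U) (hcpt : ∀ U ∈ S, IsCompact U)
    (hNE : ∀ U ∈ S, U.Nonempty)
    (hdir : ∀ U ∈ S, ∀ V ∈ S, ∃ W ∈ S, W ⊆ U ∩ V) :
    ∃ x, ∀ U ∈ S, x ∈ U := by
  set T : Set (Set α) := {C | IsClosed C ∧ ∀ U ∈ S, (C ∩ U).Nonempty} with hT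
  have hunivT : univ ∈ T := ⟨isClosed_univ, fun U hU => by simpa using hNE U hU⟩
  have Hchain : ∀ c ⊆ T, IsChain (· ⊆ ·) c → c.Nonempty →
      ∃ lb ∈ T, ∀ s ∈ c, lb ⊆ s := by
    intro c hcT hchain hcne
    refine ⟨⋂₀ c, ⟨isClosed_sInter fun D hD => (hcT hD).1, fun U hU => ?_⟩,
      fun s hs => sInter_subset_of_mem hs⟩
    -- work inside the compact set U
    have hUcpt : IsCompact U := hcpt U hU
    haveI : CompactSpace U := isCompact_iff_compactSpace.mp hUcpt
    have : (⋂ D : c, ((↑) ⁻¹' (D : Set α) : Set U)).Nonempty := by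
      haveI : Nonempty c := hcne.to_subtype
      apply IsCompact.nonempty_iInter_of_directed_nonempty_isCompact_isClosed
      · rintro ⟨D₁, hD₁⟩ ⟨D₂, hD₂⟩
        rcases hchain.total hD₁ hD₂ with h | h
        · exact ⟨⟨D₁, hD₁⟩, le_refl _, Set.preimage_mono h⟩
        · exact ⟨⟨D₂, hD₂⟩, Set.preimage_mono h, le_refl _⟩
      · rintro ⟨D, hD⟩
        obtain ⟨z, hzD, hzU⟩ := (hcT hD).2 U hU
        exact ⟨⟨z, hzU⟩, hzD⟩
      · rintro ⟨D, hD⟩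
        exact (((hcT hD).1.preimage continuous_subtype_val).isCompact)
      · rintro ⟨D, hD⟩
        exact (hcT hD).1.preimage continuous_subtype_val
    obtain ⟨⟨z, hzU⟩, hz⟩ := this
    refine ⟨z, fun D hD => ?_, hzU⟩
    exact Set.mem_iInter.mp hz ⟨D, hD⟩
  obtain ⟨C, -, hCT, hmin⟩ := zorn_superset_nonempty T Hchain univ hunivT
  · -- C is irreducible
    have hCclosed : IsClosed C := hCT.1
    have hCmeets : ∀ U ∈ S, (C ∩ U).Nonempty := hCT.2
    obtain ⟨U₀, hU₀⟩ := hne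
    have hCne : C.Nonempty := ((hCmeets U₀ hU₀).mono (inter_subset_left))
    have hirr : IsIrreducible C := by
      refine ⟨hCne, fun V₁ V₂ hV₁ hV₂ ⟨z₁, hz₁C, hz₁⟩ ⟨z₂, hz₂C, hz₂⟩ => ?_⟩
      by_contra hempty
      rw [Set.not_nonempty_iff_eq_empty] at hempty
      -- one of C \ V₁, C \ V₂ is in T
      have key : (C \ V₁) ∈ T ∨ (C \ V₂) ∈ T := by
        by_contra h
        push_neg at h
        obtain ⟨h1, h2⟩ := h
        have c1 : IsClosed (C \ V₁) := hCclosed.sdiff hV₁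
        have c2 : IsClosed (C \ V₂) := hCclosed.sdiff hV₂
        simp only [hT, Set.mem_setOf_eq, not_and, not_forall] at h1 h2
        obtain ⟨U₁, hU₁S, hU₁⟩ := h1 c1
        obtain ⟨U₂, hU₂S, hU₂⟩ := h2 c2
        rw [Set.not_nonempty_iff_eq_empty] at hU₁ hU₂
        obtain ⟨W, hWS, hWsub⟩ := hdir U₁ hU₁S U₂ hU₂S
        obtain ⟨w, hwC, hwW⟩ := hCmeets W hWS
        have hwV₁ : w ∈ V₁ := by
          by_contra hw
          exact absurd hU₁ (Set.nonempty_iff_ne_empty.mp ⟨w, ⟨hwC, hw⟩, (hWsub hwW).1⟩)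
        have hwV₂ : w ∈ V₂ := by
          by_contra hw
          exact absurd hU₂ (Set.nonempty_iff_ne_empty.mp ⟨w, ⟨hwC, hw⟩, (hWsub hwW).2⟩)
        exact absurd hempty (Set.nonempty_iff_ne_empty.mp ⟨w, ⟨hwC, hwV₁, hwV₂⟩⟩)
      rcases key with hK | hK
      · exact (hmin hK Set.diff_subset hz₁C).2 hz₁
      · exact (hmin hK Set.diff_subset hz₂C).2 hz₂
    obtain ⟨x, hx⟩ := QuasiSober.sober hirr hCclosed
    refine ⟨x, fun U hU => ?_⟩
    obtain ⟨z, hzC, hzU⟩ := hCmeets U hU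
    have : z ∈ closure ({x} : Set α) := by rw [hx]; exact hzC
    obtain ⟨w, hwU, hwx⟩ := mem_closure_iff.mp this U (hopen U hU) hzU
    rwa [Set.mem_singleton_iff.mp hwx] at hwU

/-- If `X` is a coherent subspace of a coherent space `Y` (with spectral inclusion),
then the closure of `X` consists exactly of the specializations of points of `X`. -/
theorem stmt_7 {Y : Type*} [TopologicalSpace Y] (hY : IsSpectralSpace Y)
    (X : Set Y) (hX : IsSpectralSpace X)
    (hincl : IsSpectralMap ((↑) : X → Y)) :
    closure X = {y : Y | ∃ x ∈ X, y ∈ closure {x}} := by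
  obtain ⟨hYc, hYt0, hYsober, hYqs, hYbasis⟩ := hY
  obtain ⟨hXc, hXt0, hXsober, hXqs, hXbasis⟩ := hX
  apply Set.Subset.antisymm
  · intro y hy
    haveI := hXsober
    -- the family of preimages of compact open neighbourhoods of y
    set S : Set (Set X) := {V | ∃ U : Set Y, IsOpen U ∧ IsCompact U ∧ y ∈ U ∧
      V = ((↑) : X → Y) ⁻¹' U} with hS
    have hne : S.Nonempty := by
      haveI := hYc
      exact ⟨_, Set.univ, isOpen_univ, isCompact_univ, Set.mem_univ y, rfl⟩
    have hopen : ∀ V ∈ S, IsOpen V := by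
      rintro V ⟨U, hUo, -, -, rfl⟩
      exact hUo.preimage continuous_subtype_val
    have hcpt : ∀ V ∈ S, IsCompact V := by
      rintro V ⟨U, hUo, hUc, -, rfl⟩
      exact hincl.isCompact_preimage_of_isOpen hUo hUc
    have hNE : ∀ V ∈ S, V.Nonempty := by
      rintro V ⟨U, hUo, -, hyU, rfl⟩
      obtain ⟨z, hzU, hzX⟩ := mem_closure_iff.mp hy U hUo hyU
      exact ⟨⟨z, hzX⟩, hzU⟩
    have hdir : ∀ V₁ ∈ S, ∀ V₂ ∈ S, ∃ W ∈ S, W ⊆ V₁ ∩ V₂ := by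
      rintro V₁ ⟨U₁, hU₁o, hU₁c, hyU₁, rfl⟩ V₂ ⟨U₂, hU₂o, hU₂c, hyU₂, rfl⟩
      refine ⟨((↑) : X → Y) ⁻¹' (U₁ ∩ U₂),
        ⟨U₁ ∩ U₂, hU₁o.inter hU₂o,
          hYqs.inter_isCompact U₁ U₂ hU₁o hU₁c hU₂o hU₂c, ⟨hyU₁, hyU₂⟩, rfl⟩,
        subset_of_eq rfl⟩
    obtain ⟨x, hx⟩ := aux_exists_mem_of_directed S hne hopen hcpt hNE hdir
    refine ⟨(x : Y), x.2, ?_⟩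
    rw [mem_closure_iff]
    intro V hVo hyV
    obtain ⟨U, ⟨hUo, hUc⟩, hyU, hUV⟩ := hYbasis.exists_subset_of_mem_open hyV hVo
    have : x ∈ ((↑) : X → Y) ⁻¹' U := hx _ ⟨U, hUo, hUc, hyU, rfl⟩
    exact ⟨(x : Y), hUV this, rfl⟩
  · rintro y ⟨x, hxX, hy⟩
    exact closure_mono (Set.singleton_subset_iff.mpr hxX) hy
end

section
/- Let X and Y be sober topological spaces and f : X → Y a continuous map. In the category of sober topological spaces and continuous maps (the full subcategory of the category of topological spaces on T0 quasi-sober spaces), f is an epimorphism if and only if for every closed subset z of Y, the set (range f) ∩ z is dense in z (i.e., z ⊆ closure((range f) ∩ z)). -/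
open CategoryTheory

/-- The category of sober topological spaces: the full subcategory of `TopCat`
on the `T0` quasi-sober spaces. -/
abbrev SoberCat : Type _ :=
  CategoryTheory.ObjectProperty.FullSubcategory fun Z : TopCat => T0Space Z ∧ QuasiSober Z

/-! If `range f` meets every closed set densely, then for two maps `g h` out of `Y` agreeing on
`range f` and any `y`, the point `y` lies in the closure of `range f ∩ closure {y}`, so `g y` and
`h y` specialize to each other; in a `T0` target they are equal.

Conversely, continuous maps into the Sierpiński space `Prop` (which is sober) are open sets, so if
`f` is an epimorphism, open subsets of `Y` are determined by their trace on `range f`. A point `y`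
outside `closure (range f ∩ closure {y})` would separate two open sets with the same trace. -/

open Set Topology

theorem Topology.IsUpperSet.quasiSober {α : Type*} [CompleteLinearOrder α] [Finite α]
    [TopologicalSpace α] [Topology.IsUpperSet α] : QuasiSober α where
  sober {S} hne hS := by
    have hlower : IsLowerSet S := IsUpperSet.isClosed_iff_isLower.mp hS
    have hsup : sSup S ∈ S := hne.1.csSup_mem S.toFinite
    refine ⟨sSup S, ?_⟩
    rw [isGenericPoint_def, IsUpperSet.closure_singleton]
    exact Subset.antisymm (fun a ha => hlower ha hsup) fun a ha => le_sSup ha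

instance : QuasiSober Prop := Topology.IsUpperSet.quasiSober

instance {X : Type*} [TopologicalSpace X] [QuasiSober X] : QuasiSober (ULift X) :=
  Homeomorph.ulift.isClosedEmbedding.quasiSober

section StronglyDense

variable {Y Z : Type*} [TopologicalSpace Y] [TopologicalSpace Z] {A : Set Y}

theorem specializes_of_eqOn_of_mem_closure_inter {g h : Y → Z} (hg : Continuous g)
    (hh : Continuous h) (hgh : EqOn g h A) {y : Y} (hy : y ∈ closure (A ∩ closure {y})) :
    h y ⤳ g y := by
  have hsub : A ∩ closure {y} ⊆ g ⁻¹' closure {h y} := by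
    rintro a ⟨haA, hya⟩
    rw [mem_preimage, hgh haA]
    exact ((specializes_iff_mem_closure.mpr hya).map hh).mem_closure
  exact specializes_iff_mem_closure.mpr
    (closure_minimal hsub (isClosed_closure.preimage hg) hy)

theorem eq_of_eqOn_of_forall_subset_closure_inter [T0Space Z]
    (hA : ∀ z : Set Y, IsClosed z → z ⊆ closure (A ∩ z)) {g h : Y → Z} (hg : Continuous g)
    (hh : Continuous h) (hgh : EqOn g h A) : g = h := by
  funext y
  have hy : y ∈ closure (A ∩ closure {y}) :=
    hA _ isClosed_closure (subset_closure rfl)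
  exact ((specializes_of_eqOn_of_mem_closure_inter hh hg hgh.symm hy).antisymm
    (specializes_of_eqOn_of_mem_closure_inter hg hh hgh hy)).eq

/-- The open sets `(closure {y})ᶜ ⊆ (closure (A ∩ closure {y}))ᶜ ∪ (closure {y})ᶜ` have the same
trace on `A`, and they differ at `y` unless `y ∈ closure (A ∩ closure {y})`. -/
theorem subset_closure_inter_of_injOn_inter (hA : InjOn (· ∩ A) {U : Set Y | IsOpen U})
    {z : Set Y} (hz : IsClosed z) : z ⊆ closure (A ∩ z) := by
  intro y hyz
  set C := closure ({y} : Set Y)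
  have hyC : y ∈ C := subset_closure rfl
  by_contra hy
  have hyV : y ∉ closure (A ∩ C) := fun h =>
    hy (closure_mono (inter_subset_inter_right A (closure_minimal (by simpa) hz)) h)
  have htrace : Cᶜ ∩ A = ((closure (A ∩ C))ᶜ ∪ Cᶜ) ∩ A := by
    ext a
    refine and_congr_left fun haA => ⟨Or.inr, ?_⟩
    rintro (haV | haC)
    · exact fun haC => haV (subset_closure ⟨haA, haC⟩)
    · exact haC
  have hUV := hA isClosed_closure.isOpen_compl
    (isClosed_closure.isOpen_compl.union isClosed_closure.isOpen_compl) htrace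
  have : y ∈ Cᶜ := hUV ▸ Or.inl hyV
  exact this hyC

end StronglyDense

namespace SoberCat

abbrev of (X : Type u) [TopologicalSpace X] [T0Space X] [QuasiSober X] : SoberCat :=
  ⟨TopCat.of X, ‹_›, ‹_›⟩

abbrev ofHom {X Y : Type u} [TopologicalSpace X] [TopologicalSpace Y]
    [T0Space X] [QuasiSober X] [T0Space Y] [QuasiSober Y] (f : C(X, Y)) : of X ⟶ of Y :=
  ObjectProperty.homMk (TopCat.ofHom f)

variable {X Y : Type u} [TopologicalSpace X] [TopologicalSpace Y]
    [T0Space X] [QuasiSober X] [T0Space Y] [QuasiSober Y] {f : C(X, Y)}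

theorem injOn_inter_range_of_epi_ofHom (hf : Epi (ofHom f)) :
    InjOn (· ∩ range f) {U : Set Y | IsOpen U} := by
  intro U hU V hV hUV
  let χ (W : Set Y) (hW : IsOpen W) : C(Y, ULift.{u} Prop) :=
    ⟨fun y => ULift.up (y ∈ W), continuous_uliftUp.comp (continuous_Prop.mpr hW)⟩
  have hχ : ofHom f ≫ ofHom (χ U hU) = ofHom f ≫ ofHom (χ V hV) := by
    ext x
    have hx : f x ∈ U ↔ f x ∈ V := by
      simpa only [mem_inter_iff, mem_range_self, and_true] using Set.ext_iff.mp hUV (f x)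
    exact hx
  ext y
  exact Iff.of_eq (congrArg ULift.down
    (ConcreteCategory.congr_hom (congrArg (·.hom) ((cancel_epi (ofHom f)).mp hχ)) y))

theorem epi_ofHom (hf : ∀ z : Set Y, IsClosed z → z ⊆ closure (range f ∩ z)) :
    Epi (ofHom f) := by
  refine ⟨fun {W} g h hgh => ?_⟩
  have : T0Space W.obj := W.property.1
  have hfac : EqOn g.hom.hom h.hom.hom (range f) := by
    rintro _ ⟨x, rfl⟩
    exact ConcreteCategory.congr_hom (congrArg (·.hom) hgh) x
  ext y
  exact congrFun (eq_of_eqOn_of_forall_subset_closure_inter hf g.hom.hom.continuous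
    h.hom.hom.continuous hfac) y

end SoberCat

/-- A continuous map of sober spaces is an epimorphism in the category of sober
spaces if and only if `range f ∩ z` is dense in `z` for every closed `z ⊆ Y`. -/
theorem stmt_8 {X Y : Type u} [TopologicalSpace X] [TopologicalSpace Y]
    [T0Space X] [QuasiSober X] [T0Space Y] [QuasiSober Y]
    (f : C(X, Y)) :
    Epi (show (⟨TopCat.of X, ‹T0Space X›, ‹QuasiSober X›⟩ : SoberCat) ⟶
          ⟨TopCat.of Y, ‹T0Space Y›, ‹QuasiSober Y›⟩ from ObjectProperty.homMk (TopCat.ofHom f)) ↔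
      ∀ z : Set Y, IsClosed z → z ⊆ closure (Set.range f ∩ z) := by
  change Epi (SoberCat.ofHom f) ↔ _
  exact ⟨fun hf _ => subset_closure_inter_of_injOn_inter
    (SoberCat.injOn_inter_range_of_epi_ofHom hf), SoberCat.epi_ofHom⟩
end

section
/- Let k be a field. The Krull dimension of the ring R = ∏_{n ≥ 1} k[x]/(xⁿ) is at least 1 (in particular, it is not zero), even though each factor k[x]/(xⁿ) has Krull dimension 0. -/
/-!
Let `x = (x mod xⁿ)ₙ ∈ R`. Looking at the factor `n = m + 1` shows that no power `xᵐ` is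
a multiple of `xᵐ⁺¹`, so `0` does not lie in the multiplicative set `x^ℕ (1 + xR)`. A prime
`𝔭` disjoint from that set misses `x`, yet `𝔭 + (x)` is proper (it misses `1 + xR`), so `𝔭`
lies strictly below any maximal ideal containing `𝔭 + (x)`. Each factor is finite-dimensional
over `k`, hence Artinian, hence of dimension `0`.
-/

open Polynomial

/-- The ring `k[x]/(xⁿ)`. -/
abbrev TruncPoly (k : Type*) [Field k] (n : ℕ+) : Type _ :=
  k[X] ⧸ Ideal.span {(X : k[X]) ^ (n : ℕ)}

section OneLeRingKrullDim

variable {R : Type*} [CommRing R]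

def Submonoid.powersMulOneAddMul (a : R) : Submonoid R where
  carrier := {y | ∃ (m : ℕ) (r : R), y = a ^ m * (1 + a * r)}
  one_mem' := ⟨0, 0, by ring⟩
  mul_mem' := by
    rintro _ _ ⟨m, r, rfl⟩ ⟨m', r', rfl⟩
    exact ⟨m + m', r + r' + a * r * r', by ring⟩

theorem Submonoid.zero_notMem_powersMulOneAddMul {a : R}
    (h : ∀ m : ℕ, a ^ m ∉ Ideal.span {a ^ (m + 1)}) :
    (0 : R) ∉ Submonoid.powersMulOneAddMul a := by
  rintro ⟨m, r, hzero⟩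
  exact h m (Ideal.mem_span_singleton'.mpr ⟨-r, by linear_combination hzero⟩)

theorem exists_isPrime_notMem_sup_span_ne_top {a : R}
    (h : ∀ m : ℕ, a ^ m ∉ Ideal.span {a ^ (m + 1)}) :
    ∃ p : Ideal R, p.IsPrime ∧ a ∉ p ∧ p ⊔ Ideal.span {a} ≠ ⊤ := by
  set T := Submonoid.powersMulOneAddMul a
  have hdisj : Disjoint ((⊥ : Ideal R) : Set R) T := by
    rw [Set.disjoint_left]
    rintro x hx hxT
    rw [SetLike.mem_coe, Ideal.mem_bot] at hx
    exact Submonoid.zero_notMem_powersMulOneAddMul h (hx ▸ hxT)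
  obtain ⟨p, hp, -, hpT⟩ := Ideal.exists_le_prime_disjoint ⊥ T hdisj
  refine ⟨p, hp, fun hap => Set.disjoint_left.mp hpT hap ⟨1, 0, by ring⟩, fun htop => ?_⟩
  obtain ⟨x, hx, y, hy, hxy⟩ := Submodule.mem_sup.mp ((Ideal.eq_top_iff_one _).mp htop)
  obtain ⟨c, rfl⟩ := Ideal.mem_span_singleton'.mp hy
  exact Set.disjoint_left.mp hpT hx ⟨0, -c, by linear_combination hxy⟩

theorem one_le_ringKrullDim_of_forall_pow_notMem_span {a : R}
    (h : ∀ m : ℕ, a ^ m ∉ Ideal.span {a ^ (m + 1)}) :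
    1 ≤ ringKrullDim R := by
  obtain ⟨p, hp, hap, hne⟩ := exists_isPrime_notMem_sup_span_ne_top h
  obtain ⟨q, hq, hle⟩ := Ideal.exists_le_maximal _ hne
  have hpq : p < q := lt_of_le_of_ne (le_sup_left.trans hle) fun hpq =>
    hap (hpq ▸ hle (Ideal.mem_sup_right (Ideal.mem_span_singleton_self a)))
  exact Order.one_le_krullDim_iff.mpr ⟨⟨p, hp⟩, ⟨q, hq.isPrime⟩, hpq⟩

end OneLeRingKrullDim

namespace TruncPoly

variable (k : Type*) [Field k]

theorem mk_X_pow_eq_zero_iff {n : ℕ+} {j : ℕ} :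
    (Ideal.Quotient.mk _ X : TruncPoly k n) ^ j = 0 ↔ (n : ℕ) ≤ j := by
  rw [← map_pow, Ideal.Quotient.eq_zero_iff_mem, Ideal.mem_span_singleton,
    pow_dvd_pow_iff X_ne_zero not_isUnit_X]

instance (n : ℕ+) : Nontrivial (TruncPoly k n) :=
  nontrivial_of_ne ((Ideal.Quotient.mk _ X) ^ 0) 0 ((mk_X_pow_eq_zero_iff k).not.mpr n.pos.not_ge)

instance (n : ℕ+) : IsArtinianRing (TruncPoly k n) :=
  have : Module.Finite k (TruncPoly k n) := (monic_X_pow (n : ℕ)).finite_adjoinRoot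
  IsArtinianRing.of_finite k (TruncPoly k n)

noncomputable def piX : ∀ n : ℕ+, TruncPoly k n := fun _ => Ideal.Quotient.mk _ X

theorem piX_pow_notMem_span (m : ℕ) : piX k ^ m ∉ Ideal.span {piX k ^ (m + 1)} := by
  intro hmem
  obtain ⟨b, hb⟩ := Ideal.mem_span_singleton'.mp hmem
  have hcomp := congrFun hb m.succPNat
  simp only [Pi.mul_apply, Pi.pow_apply, piX] at hcomp
  rw [(mk_X_pow_eq_zero_iff k).mpr m.succPNat_coe.le, mul_zero, eq_comm,
    mk_X_pow_eq_zero_iff, Nat.succPNat_coe] at hcomp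
  exact m.lt_succ_self.not_ge hcomp

end TruncPoly

/-- The Krull dimension of the product ring `∏_{n ≥ 1} k[x]/(xⁿ)` is at least `1`,
even though each factor `k[x]/(xⁿ)` has Krull dimension `0`. -/
theorem stmt_12 (k : Type*) [Field k] :
    1 ≤ ringKrullDim (∀ n : ℕ+, TruncPoly k n) ∧
      ∀ n : ℕ+, ringKrullDim (TruncPoly k n) = 0 :=
  ⟨one_le_ringKrullDim_of_forall_pow_notMem_span (TruncPoly.piX_pow_notMem_span k),
    fun _ => ringKrullDimZero_iff_ringKrullDim_eq_zero.mp inferInstance⟩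
end

section
/- Let X and Y be spectral (coherent) topological spaces and f : X → Y a continuous spectral map. Then the range of f, equipped with the subspace topology from Y, is again a spectral space: it is compact, T0, quasi-sober, quasi-separated, and its compact open sets form a basis of its topology. -/
/-!
Write `S` for the range of `f`. Compactness is clear, and since the inclusion `S → Y` is a spectral
embedding, the compact opens of `S` are exactly the traces of compact opens of `Y`; this gives the
basis and quasi-separatedness. For quasi-soberness, let `y` be the generic point of the closure of
an irreducible `T ⊆ S`. The sets `f ⁻¹' (U ∩ closure T)`, for `U` a compact open neighbourhood of
`y`, are nonempty, directed, and closed in the constructible topology of `X`, which is compact;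
a common point `x` has `f x ⤳ y` and `y ⤳ f x`, so `y = f x ∈ S`.
-/

open Set TopologicalSpace Topology

section

variable {X Y : Type*} [TopologicalSpace X] [TopologicalSpace Y]

lemma constructibleTopology_le [PrespectralSpace X] :
    constructibleTopology X ≤ ‹TopologicalSpace X› := by
  intro s hs
  obtain ⟨S, hS, rfl⟩ := PrespectralSpace.isTopologicalBasis.open_eq_sUnion hs
  exact @isOpen_sUnion _ (constructibleTopology X) _
    fun U hU ↦ (hS hU).2.isOpen_constructibleTopology_of_isOpen (hS hU).1

lemma IsClosed.isClosed_constructibleTopology [PrespectralSpace X] {s : Set X}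
    (hs : IsClosed s) : IsClosed[constructibleTopology X] s :=
  @IsClosed.mk _ (constructibleTopology X) _ (constructibleTopology_le _ hs.isOpen_compl)

lemma IsCompact.isClosed_constructibleTopology_of_isOpen {s : Set X} (hs : IsCompact s)
    (ho : IsOpen s) : IsClosed[constructibleTopology X] s :=
  @IsClosed.mk _ (constructibleTopology X) _
    (IsCompact.isOpen_constructibleTopology_of_isClosed (by rwa [compl_compl]) ho.isClosed_compl)

lemma IsSpectralMap.mem_range_of_isGenericPoint [CompactSpace X] [QuasiSober X]
    [PrespectralSpace X] [QuasiSeparatedSpace X] [T0Space Y] [PrespectralSpace Y] {f : X → Y}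
    (hf : IsSpectralMap f) {T : Set Y} (hT : T ⊆ range f) {y : Y}
    (hy : IsGenericPoint y (closure T)) : y ∈ range f := by
  let ι := {U : Set Y // IsOpen U ∧ IsCompact U ∧ y ∈ U}
  have hbasis := PrespectralSpace.isTopologicalBasis (X := Y)
  have hι : Nonempty ι := by
    obtain ⟨U, hU, hyU, -⟩ := hbasis.exists_subset_of_mem_open (mem_univ y) isOpen_univ
    exact ⟨⟨U, hU.1, hU.2, hyU⟩⟩
  let K (U : ι) : Set (WithConstructibleTopology X) :=
    WithTopology.ofTopology ⁻¹' (f ⁻¹' (U.1 ∩ closure T))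
  have hK_directed : Directed (· ⊇ ·) K := by
    rintro ⟨U₁, hU₁, hU₁c, hyU₁⟩ ⟨U₂, hU₂, hU₂c, hyU₂⟩
    obtain ⟨U, hU, hyU, hUsub⟩ :=
      hbasis.exists_subset_of_mem_open (mem_inter hyU₁ hyU₂) (hU₁.inter hU₂)
    refine ⟨⟨U, hU.1, hU.2, hyU⟩, ?_, ?_⟩ <;> intro x hx
    · exact ⟨(hUsub hx.1).1, hx.2⟩
    · exact ⟨(hUsub hx.1).2, hx.2⟩
  have hK_nonempty (U : ι) : (K U).Nonempty := by
    obtain ⟨t, htU, htT⟩ := mem_closure_iff.mp hy.mem U.1 U.2.1 U.2.2.2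
    obtain ⟨x, rfl⟩ := hT htT
    exact ⟨WithTopology.toTopology _ x, htU, subset_closure htT⟩
  have hK_closed (U : ι) : IsClosed (K U) := by
    rw [WithConstructibleTopology.isClosed_iff]
    exact @IsClosed.inter _ _ _ (constructibleTopology X)
      ((hf.isCompact_preimage_of_isOpen U.2.1 U.2.2.1).isClosed_constructibleTopology_of_isOpen
        (U.2.1.preimage hf.continuous))
      (isClosed_closure.preimage hf.continuous).isClosed_constructibleTopology
  obtain ⟨x, hx⟩ := IsCompact.nonempty_iInter_of_directed_nonempty_isCompact_isClosed K
    hK_directed hK_nonempty (fun U ↦ (hK_closed U).isCompact) hK_closed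
  have hfx : ∀ U : ι, f x.ofTopology ∈ U.1 ∩ closure T := fun U ↦ mem_iInter.mp hx U
  refine ⟨x.ofTopology, (Specializes.antisymm ?_ (hy.specializes ?_)).eq⟩
  · refine specializes_iff_forall_open.mpr fun s hs hys ↦ ?_
    obtain ⟨U, hU, hyU, hUs⟩ := hbasis.exists_subset_of_mem_open hys hs
    exact hUs (hfx ⟨U, hU.1, hU.2, hyU⟩).1
  · exact (hfx hι.some).2

lemma quasiSober_subtype_of_genericPoint_mem [QuasiSober Y] {S : Set Y}
    (h : ∀ T ⊆ S, ∀ hT : IsIrreducible T, hT.genericPoint ∈ S) : QuasiSober S where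
  sober {Z} hZ hZc := by
    have hT := hZ.image Subtype.val continuous_subtype_val.continuousOn
    refine ⟨⟨_, h _ (Subtype.coe_image_subset S Z) hT⟩, ?_⟩
    rw [isGenericPoint_def, IsInducing.subtypeVal.closure_eq_preimage_closure_image,
      image_singleton, hT.isGenericPoint_genericPoint_closure.def,
      ← IsInducing.subtypeVal.closure_eq_preimage_closure_image, hZc.closure_eq]

lemma IsSpectralMap.isSpectralMap_subtypeVal_range {f : X → Y} (hf : IsSpectralMap f) :
    IsSpectralMap (Subtype.val : range f → Y) where
  toContinuous := continuous_subtype_val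
  isCompact_preimage_of_isOpen {s} hs hsc := by
    rw [IsEmbedding.subtypeVal.isCompact_iff, Subtype.image_preimage_coe,
      ← image_preimage_eq_range_inter]
    exact (hf.isCompact_preimage_of_isOpen hs hsc).image hf.continuous

lemma Topology.IsInducing.exists_isOpen_isCompact_preimage_eq [PrespectralSpace Y] {f : X → Y}
    (hf : IsInducing f) {U : Set X} (hU : IsOpen U) (hUc : IsCompact U) :
    ∃ W : Set Y, IsOpen W ∧ IsCompact W ∧ f ⁻¹' W = U := by
  obtain ⟨V, hV, rfl⟩ := hf.isOpen_iff.mp hU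
  obtain ⟨W, hWc, hWo, hUW, hWV⟩ := PrespectralSpace.exists_isCompact_and_isOpen_between
    (hUc.image hf.continuous) hV (image_preimage_subset f V)
  exact ⟨W, hWo, hWc, (preimage_mono hWV).antisymm (image_subset_iff.mp hUW)⟩

lemma Topology.IsInducing.quasiSeparatedSpace_of_isSpectralMap [PrespectralSpace Y]
    [QuasiSeparatedSpace Y] {f : X → Y} (hf : IsInducing f) (hf' : IsSpectralMap f) :
    QuasiSeparatedSpace X where
  inter_isCompact U V hU hUc hV hVc := by
    obtain ⟨U', hU', hU'c, rfl⟩ := hf.exists_isOpen_isCompact_preimage_eq hU hUc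
    obtain ⟨V', hV', hV'c, rfl⟩ := hf.exists_isOpen_isCompact_preimage_eq hV hVc
    exact hf'.isCompact_preimage_of_isOpen (hU'.inter hV')
      (QuasiSeparatedSpace.inter_isCompact U' V' hU' hU'c hV' hV'c)

end

/-- The image of a spectral map of spectral spaces, with the subspace topology,
is again a spectral space. -/
theorem stmt_13 {X Y : Type*} [TopologicalSpace X] [TopologicalSpace Y]
    (hX : IsSpectralSpace X) (hY : IsSpectralSpace Y)
    (f : X → Y) (hf : IsSpectralMap f) :
    IsSpectralSpace (Set.range f) := by
  obtain ⟨_, -, _, _, hX⟩ := hX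
  obtain ⟨-, _, _, _, hY⟩ := hY
  have : PrespectralSpace X := ⟨hX⟩
  have : PrespectralSpace Y := ⟨hY⟩
  have hval := hf.isSpectralMap_subtypeVal_range
  refine ⟨isCompact_iff_compactSpace.mp (isCompact_range hf.continuous), inferInstance,
    ?_, IsInducing.subtypeVal.quasiSeparatedSpace_of_isSpectralMap hval,
    (PrespectralSpace.of_isInducing _ IsInducing.subtypeVal hval).isTopologicalBasis⟩
  exact quasiSober_subtype_of_genericPoint_mem fun T hT hTirr ↦
    hf.mem_range_of_isGenericPoint hT hTirr.isGenericPoint_genericPoint_closure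
end
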